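/- Discrete Euler–Lagrange equations characterize stationarity of the discrete action (Equation 14): for a configuration q = (q_0,…,q_N), the following are equivalent: (i) DS_d(q)(δ) = 0 for every variation δ = (δ_0,…,δ_N) with δ_0 = 0 and δ_N = 0; (ii) for every n with 1 ≤ n ≤ N−1, the linear functional v ↦ D₁L_d(q_n, q_{n+1})(v) + D₂L_d(q_{n−1}, q_n)(v) − λ_n · (Dg(q_n)(v)) on ℝ^m is identically zero, i.e. the discrete Euler–Lagrange equation ∂L_d(q_n,q_{n+1})/∂q_n + ∂L_d(q_{n−1},q_n)/∂q_n − (Dg(q_n))ᵀ λ_n = 0 holds at every interior time step. -/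

import Mathlib

/-! The action is a chain sum `∑ₙ Lₙ(qₙ, qₙ₊₁)` of two-point Lagrangians
`Lₙ(x, y) = L_d(x, y) - ½ (λₙ · g x + λₙ₊₁ · g y)`. Its derivative in the direction `δ` is
`∑ₙ D₁Lₙ δₙ + D₂Lₙ δₙ₊₁`; when `δ` vanishes at both ends, shifting the index of the second
sum (discrete integration by parts) turns it into `∑_{0<n<N} (D₁Lₙ + D₂Lₙ₋₁) δₙ`, and
variations supported at a single interior time show that this vanishes for all such `δ` iff
every coefficient does. At time `n` the two halves of the constraint term recombine into
`λₙ · Dg(qₙ)`. -/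

open Matrix Finset Fin.NatCast

variable {𝕜 E F G : Type*} [NontriviallyNormedField 𝕜]
  [NormedAddCommGroup E] [NormedSpace 𝕜 E] [NormedAddCommGroup F] [NormedSpace 𝕜 F]
  [NormedAddCommGroup G] [NormedSpace 𝕜 G]

theorem DifferentiableAt.fderiv_apply_prod {f : E × F → G} {a : E} {b : F}
    (hf : DifferentiableAt 𝕜 f (a, b)) (u : E) (v : F) :
    fderiv 𝕜 f (a, b) (u, v) =
      fderiv 𝕜 (fun x => f (x, b)) a u + fderiv 𝕜 (fun y => f (a, y)) b v := by
  have h₁ : HasFDerivAt (fun x => f (x, b)) _ a :=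
    hf.hasFDerivAt.comp a (hasFDerivAt_prodMk_left a b)
  have h₂ : HasFDerivAt (fun y => f (a, y)) _ b :=
    hf.hasFDerivAt.comp b (hasFDerivAt_prodMk_right a b)
  rw [h₁.fderiv, h₂.fderiv]
  simp [← map_add]

@[fun_prop]
theorem DifferentiableAt.const_dotProduct {ι : Type*} [Fintype ι] {f : E → ι → 𝕜} {x : E}
    (w : ι → 𝕜) (hf : DifferentiableAt 𝕜 f x) :
    DifferentiableAt 𝕜 (fun y => w ⬝ᵥ f y) x := by
  unfold dotProduct
  fun_prop

theorem fderiv_const_dotProduct_apply {ι : Type*} [Fintype ι] {f : E → ι → 𝕜} {x : E}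
    (w : ι → 𝕜) (hf : DifferentiableAt 𝕜 f x) (v : E) :
    fderiv 𝕜 (fun y => w ⬝ᵥ f y) x v = w ⬝ᵥ fderiv 𝕜 f x v := by
  unfold dotProduct
  rw [fderiv_fun_sum fun i _ => by fun_prop, _root_.sum_apply]
  refine Finset.sum_congr rfl fun i _ => ?_
  rw [((hasFDerivAt_pi'.mp hf.hasFDerivAt i).const_mul (w i)).fderiv]
  simp

theorem sum_range_add_succ_eq_sum_Ioo {M : Type*} [AddCommMonoid M] (a b : ℕ → M) {N : ℕ}
    (ha : a 0 = 0) (hb : b N = 0) :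
    ∑ n ∈ range N, (a n + b (n + 1)) = ∑ n ∈ Ioo 0 N, (a n + b n) := by
  rcases N with _ | N
  · simp
  rw [← Ico_add_one_left_eq_Ioo, sum_Ico_eq_sum_range, sum_add_distrib, sum_add_distrib,
    sum_range_succ', sum_range_succ, ha, hb]
  simp [add_comm 1]

theorem Fin.natCast_eq_natCast_iff_of_le {N k n : ℕ} (hk : k ≤ N) (hn : n ≤ N) :
    (k : Fin (N + 1)) = n ↔ k = n := by
  rw [Fin.ext_iff, Fin.val_cast_of_lt (Nat.lt_succ_of_le hk),
    Fin.val_cast_of_lt (Nat.lt_succ_of_le hn)]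

theorem forall_sum_Ioo_eq_zero_iff {E M : Type*} [Zero E] [AddCommMonoid M] {N : ℕ}
    (A : ℕ → E → M) (hA : ∀ n, A n 0 = 0) :
    (∀ δ : Fin (N + 1) → E, δ 0 = 0 → δ N = 0 → ∑ n ∈ Ioo 0 N, A n (δ n) = 0) ↔
      ∀ n ∈ Ioo 0 N, ∀ v, A n v = 0 := by
  refine ⟨fun h n hn v => ?_, fun h δ _ _ => sum_eq_zero fun n hn => h n hn (δ n)⟩
  obtain ⟨hn₀, hnN⟩ := mem_Ioo.mp hn
  have hne : ∀ k ≤ N, k ≠ n → (k : Fin (N + 1)) ≠ n := fun k hk =>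
    (Fin.natCast_eq_natCast_iff_of_le hk hnN.le).not.mpr
  have := h (Pi.single (n : Fin (N + 1)) v) ?_ ?_
  · rwa [sum_eq_single_of_mem n hn fun k hk hkn => ?_, Pi.single_eq_same] at this
    rw [Pi.single_eq_of_ne (hne k (mem_Ioo.mp hk).2.le hkn), hA]
  · simpa using Pi.single_eq_of_ne (M := fun _ => E) (hne 0 (Nat.zero_le N) hn₀.ne) v
  · exact Pi.single_eq_of_ne (M := fun _ => E) (hne N le_rfl hnN.ne') v

section ChainAction

variable {N : ℕ} (L : ℕ → E × E → G) (q : Fin (N + 1) → E)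

def chainAction : G :=
  ∑ n ∈ range N, L n (q n, q (n + 1))

theorem fderiv_chainAction_apply (hL : ∀ n < N, DifferentiableAt 𝕜 (L n) (q n, q (n + 1)))
    (δ : Fin (N + 1) → E) :
    fderiv 𝕜 (chainAction L) q δ = ∑ n ∈ range N,
      (fderiv 𝕜 (fun x => L n (x, q (n + 1))) (q n) (δ n)
        + fderiv 𝕜 (fun y => L n (q n, y)) (q (n + 1)) (δ (n + 1))) := by
  have hS : HasFDerivAt (chainAction L) (∑ n ∈ range N, (fderiv 𝕜 (L n) (q n, q (n + 1))).comp
      ((ContinuousLinearMap.proj (n : Fin (N + 1))).prod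
        (ContinuousLinearMap.proj ((n : Fin (N + 1)) + 1)))) q :=
    HasFDerivAt.fun_sum fun n hn => (hL n (mem_range.mp hn)).hasFDerivAt.comp q
      ((hasFDerivAt_apply _ q).prodMk (hasFDerivAt_apply _ q))
  rw [hS.fderiv, _root_.sum_apply]
  exact sum_congr rfl fun n hn => (hL n (mem_range.mp hn)).fderiv_apply_prod _ _

theorem fderiv_chainAction_apply_eq_sum_Ioo
    (hL : ∀ n < N, DifferentiableAt 𝕜 (L n) (q n, q (n + 1)))
    {δ : Fin (N + 1) → E} (hδ₀ : δ 0 = 0) (hδN : δ N = 0) :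
    fderiv 𝕜 (chainAction L) q δ = ∑ n ∈ Ioo 0 N,
      (fderiv 𝕜 (fun x => L n (x, q (n + 1))) (q n) (δ n)
        + fderiv 𝕜 (fun y => L (n - 1) (q (n - 1), y)) (q n) (δ n)) := by
  rw [fderiv_chainAction_apply L q hL]
  convert sum_range_add_succ_eq_sum_Ioo
    (fun n => fderiv 𝕜 (fun x => L n (x, q (n + 1))) (q n) (δ n))
    (fun n => fderiv 𝕜 (fun y => L (n - 1) (q (n - 1), y)) (q n) (δ n)) ?_ ?_ using 3 with n
  · simp
  · simp [hδ₀]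
  · simp only [hδN, map_zero]

theorem chainAction_stationary_iff (hL : ∀ n < N, DifferentiableAt 𝕜 (L n) (q n, q (n + 1))) :
    (∀ δ : Fin (N + 1) → E, δ 0 = 0 → δ N = 0 → fderiv 𝕜 (chainAction L) q δ = 0) ↔
      ∀ n ∈ Ioo 0 N, ∀ v, fderiv 𝕜 (fun x => L n (x, q (n + 1))) (q n) v
        + fderiv 𝕜 (fun y => L (n - 1) (q (n - 1), y)) (q n) v = 0 := by
  rw [← forall_sum_Ioo_eq_zero_iff _ fun n => by simp only [map_zero, add_zero]]
  refine forall_congr' fun δ => imp_congr_right fun hδ₀ => imp_congr_right fun hδN => ?_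
  rw [fderiv_chainAction_apply_eq_sum_Ioo L q hL hδ₀ hδN]

end ChainAction

section ConstrainedLagrangian

variable {ι : Type*} [Fintype ι] (Ld : E × E → 𝕜) (g : E → ι → 𝕜) (μ ν : ι → 𝕜)

def constrainedLagrangian (p : E × E) : 𝕜 :=
  Ld p - 1 / 2 * (μ ⬝ᵥ g p.1 + ν ⬝ᵥ g p.2)

variable {Ld g}

theorem differentiableAt_constrainedLagrangian {p : E × E} (hLd : DifferentiableAt 𝕜 Ld p)
    (hg₁ : DifferentiableAt 𝕜 g p.1) (hg₂ : DifferentiableAt 𝕜 g p.2) :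
    DifferentiableAt 𝕜 (constrainedLagrangian Ld g μ ν) p := by
  unfold constrainedLagrangian
  fun_prop

theorem fderiv_constrainedLagrangian_left_apply {a b : E} (hLd : DifferentiableAt 𝕜 Ld (a, b))
    (hg : DifferentiableAt 𝕜 g a) (v : E) :
    fderiv 𝕜 (fun x => constrainedLagrangian Ld g μ ν (x, b)) a v
      = fderiv 𝕜 (fun x => Ld (x, b)) a v - 1 / 2 * (μ ⬝ᵥ fderiv 𝕜 g a v) := by
  dsimp only [constrainedLagrangian]
  rw [fderiv_fun_sub (by fun_prop) (by fun_prop), fderiv_const_mul (by fun_prop),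
    fderiv_add_const]
  simp [fderiv_const_dotProduct_apply _ hg]

theorem fderiv_constrainedLagrangian_right_apply {a b : E} (hLd : DifferentiableAt 𝕜 Ld (a, b))
    (hg : DifferentiableAt 𝕜 g b) (v : E) :
    fderiv 𝕜 (fun y => constrainedLagrangian Ld g μ ν (a, y)) b v
      = fderiv 𝕜 (fun y => Ld (a, y)) b v - 1 / 2 * (ν ⬝ᵥ fderiv 𝕜 g b v) := by
  dsimp only [constrainedLagrangian]
  rw [fderiv_fun_sub (by fun_prop) (by fun_prop), fderiv_const_mul (by fun_prop),
    fderiv_const_add]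
  simp [fderiv_const_dotProduct_apply _ hg]

end ConstrainedLagrangian

theorem discrete_euler_lagrange_iff_stationary_general (m l N : ℕ)
    (Ld : (Fin m → ℝ) × (Fin m → ℝ) → ℝ) (hLd : Differentiable ℝ Ld)
    (g : (Fin m → ℝ) → (Fin l → ℝ)) (hg : Differentiable ℝ g)
    (lam : ℕ → Fin l → ℝ)
    (Sd : (Fin (N + 1) → Fin m → ℝ) → ℝ)
    (hSd : Sd = fun q => ∑ n ∈ range N,
      (Ld (q n, q (n + 1))
        - (1 / 2) * (lam n ⬝ᵥ g (q n) + lam (n + 1) ⬝ᵥ g (q (n + 1)))))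
    (q : Fin (N + 1) → Fin m → ℝ) :
    (∀ δ : Fin (N + 1) → Fin m → ℝ, δ 0 = 0 → δ (N : Fin (N + 1)) = 0 →
        fderiv ℝ Sd q δ = 0) ↔
    (∀ n, 1 ≤ n → n ≤ N - 1 → ∀ v : Fin m → ℝ,
        fderiv ℝ (fun x => Ld (x, q (n + 1))) (q n) v
          + fderiv ℝ (fun y => Ld (q (n - 1), y)) (q n) v
          - lam n ⬝ᵥ fderiv ℝ g (q n) v = 0) := by
  set L := fun n => constrainedLagrangian Ld g (lam n) (lam (n + 1))
  have hL : ∀ n p, DifferentiableAt ℝ (L n) p := fun n p =>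
    differentiableAt_constrainedLagrangian _ _ (hLd p) (hg p.1) (hg p.2)
  rw [show Sd = chainAction L from hSd, chainAction_stationary_iff L q fun n _ => hL n _]
  refine forall_congr' fun n => ?_
  rcases n.eq_zero_or_pos with rfl | hn
  · simp
  have hsum (a b c : ℝ) : a - 1 / 2 * c + (b - 1 / 2 * c) = a + b - c := by ring
  have hnN : n ≤ N - 1 ↔ n < N := by omega
  simp only [L, fderiv_constrainedLagrangian_left_apply _ _ (hLd _) (hg _),
    fderiv_constrainedLagrangian_right_apply _ _ (hLd _) (hg _), mem_Ioo, Nat.sub_add_cancel hn,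
    hsum, hn, Nat.one_le_of_lt hn, hnN, true_and, forall_const]

/-- Discrete Euler–Lagrange equations characterize stationarity of the discrete
action (Equation 14): the discrete action is stationary with respect to all
variations vanishing at the endpoints iff the discrete Euler–Lagrange equation
holds at every interior time step. -/
theorem discrete_euler_lagrange_iff_stationary (m l N : ℕ) (hN : 2 ≤ N)
    (Ld : (Fin m → ℝ) × (Fin m → ℝ) → ℝ) (hLd : Differentiable ℝ Ld)
    (g : (Fin m → ℝ) → (Fin l → ℝ)) (hg : Differentiable ℝ g)
    (lam : ℕ → Fin l → ℝ)
    (Sd : (Fin (N + 1) → Fin m → ℝ) → ℝ)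
    (hSd : Sd = fun q => ∑ n ∈ range N,
      (Ld (q n, q (n + 1))
        - (1 / 2) * (lam n ⬝ᵥ g (q n) + lam (n + 1) ⬝ᵥ g (q (n + 1)))))
    (q : Fin (N + 1) → Fin m → ℝ) :
    (∀ δ : Fin (N + 1) → Fin m → ℝ, δ 0 = 0 → δ (N : Fin (N + 1)) = 0 →
        fderiv ℝ Sd q δ = 0) ↔
    (∀ n, 1 ≤ n → n ≤ N - 1 → ∀ v : Fin m → ℝ,
        fderiv ℝ (fun x => Ld (x, q (n + 1))) (q n) v
          + fderiv ℝ (fun y => Ld (q (n - 1), y)) (q n) v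
          - lam n ⬝ᵥ fderiv ℝ g (q n) v = 0) :=
  discrete_euler_lagrange_iff_stationary_general m l N Ld hLd g hg lam Sd hSd q
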